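/- With V = ℂ(q)⁴, basis as above, K : V → V the antidiagonal permutation matrix (K e_j = e_{-j}, exchanging e₁ ↔ e_{-1}, e_◇ ↔ e_{-◇}), and H the R-matrix operator on V⊗V, the reflection equation holds: (K⊗id)H(K⊗id)H = H(K⊗id)H(K⊗id) as operators on V⊗V. Together with K² = id this gives an action of the type-B Hecke algebra H_{1,q}(B_d) on V^{⊗d}. -/
import Mathlib


set_option synthInstance.maxHeartbeats 1000000
set_option maxHeartbeats 1000000

noncomputable section

/-- The variable `q` in the field `ℂ(q)` of rational functions. -/
def q : RatFunc ℂ := RatFunc.X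

/-- Entries of the R-matrix operator `H` on `V ⊗ V`, `V = ℂ(q)⁴` with ordered basis
`e_{-1}, e_{-◇}, e_◇, e₁`. -/
def Hent (p r : Fin 4 × Fin 4) : RatFunc ℂ :=
  if r.1 < r.2 then
    (if p = (r.2, r.1) then 1 else 0) + (if p = r then q⁻¹ - q else 0)
  else if r.2 < r.1 then (if p = (r.2, r.1) then 1 else 0)
  else (if p = r then q⁻¹ else 0)

/-- The R-matrix operator `H` on `V ⊗ V`. -/
def HM : Matrix (Fin 4 × Fin 4) (Fin 4 × Fin 4) (RatFunc ℂ) := Matrix.of Hent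

/-- The K-matrix: the antidiagonal permutation of `V`, exchanging `e₁ ↔ e_{-1}` and
`e_◇ ↔ e_{-◇}`. -/
def KM : Matrix (Fin 4) (Fin 4) (RatFunc ℂ) :=
  Matrix.of fun i j => if j = i.rev then 1 else 0

/-- `K ⊗ id` on `V ⊗ V`. -/
def K1 : Matrix (Fin 4 × Fin 4) (Fin 4 × Fin 4) (RatFunc ℂ) :=
  Matrix.of fun p r => KM p.1 r.1 * (if p.2 = r.2 then 1 else 0)

/-! ### Auxiliary machinery -/

set_option maxRecDepth 10000

/-- Generic version of the entries of the R-matrix, over any commutative ring,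
with `u` standing for `q⁻¹` and `v` for `q`. -/
def Gent {R : Type*} [CommRing R] (u v : R) (p r : Fin 4 × Fin 4) : R :=
  if r.1 < r.2 then
    (if p = (r.2, r.1) then 1 else 0) + (if p = r then u - v else 0)
  else if r.2 < r.1 then (if p = (r.2, r.1) then 1 else 0)
  else (if p = r then u else 0)

section Generic

variable {R : Type*} [CommRing R] (u v : R)

lemma Gsplit (p r : Fin 4 × Fin 4) :
    Gent u v p r = (if p = (r.2, r.1) then (if r.1 = r.2 then u else 1) else 0)
      + (if p = r then (if r.1 < r.2 then u - v else 0) else 0) := by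
  obtain ⟨r1, r2⟩ := r
  rcases lt_trichotomy r1 r2 with h | h | h
  · simp [Gent, h, h.ne, not_lt.mpr h.le]
  · subst h
    simp [Gent, lt_irrefl]
  · have h2 : ¬ r1 < r2 := not_lt.mpr h.le
    simp [Gent, h, h2, h.ne']

lemma Gsplit' (p r : Fin 4 × Fin 4) :
    Gent u v p r = (if r = (p.2, p.1) then (if p.1 = p.2 then u else 1) else 0)
      + (if r = p then (if p.1 < p.2 then u - v else 0) else 0) := by
  rw [Gsplit]
  have h1 : (p = (r.2, r.1)) ↔ (r = (p.2, p.1)) := by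
    constructor <;> rintro rfl <;> rfl
  refine congrArg₂ (· + ·) ?_ ?_
  · refine if_ctx_congr h1 (fun hr => ?_) (fun _ => rfl)
    subst hr
    simp [eq_comm]
  · exact if_ctx_congr eq_comm (fun hr => by subst hr; rfl) (fun _ => rfl)

lemma sum_if_right (c : Fin 4 × Fin 4) (A : R) (f : Fin 4 × Fin 4 → R) :
    (∑ x : Fin 4 × Fin 4, f x * (if x = c then A else 0)) = f c * A := by
  simp only [mul_ite, mul_zero]
  exact (Finset.sum_ite_eq' Finset.univ c (fun x => f x * A)).trans (by simp)

lemma sum_if_left (c : Fin 4 × Fin 4) (A : R) (g : Fin 4 × Fin 4 → R) :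
    (∑ x : Fin 4 × Fin 4, (if x = c then A else 0) * g x) = A * g c := by
  simp only [ite_mul, zero_mul]
  exact (Finset.sum_ite_eq' Finset.univ c (fun x => A * g x)).trans (by simp)

lemma Gsum_right (f : Fin 4 × Fin 4 → R) (r : Fin 4 × Fin 4) :
    (∑ a : Fin 4 × Fin 4, f a * Gent u v a r)
      = f (r.2, r.1) * (if r.1 = r.2 then u else 1)
        + f r * (if r.1 < r.2 then u - v else 0) := by
  simp only [fun a => Gsplit u v a r, mul_add, Finset.sum_add_distrib]
  rw [sum_if_right, sum_if_right]

lemma Gsum_left (g : Fin 4 × Fin 4 → R) (p : Fin 4 × Fin 4) :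
    (∑ a : Fin 4 × Fin 4, Gent u v p a * g a)
      = (if p.1 < p.2 then u - v else 0) * g p
        + (if p.1 = p.2 then u else 1) * g (p.2, p.1) := by
  simp only [fun a => Gsplit' u v p a, add_mul, Finset.sum_add_distrib]
  rw [sum_if_left, sum_if_left, add_comm]

/-- The reflection equation, entrywise, over a generic commutative ring. -/
lemma Gkey (p r : Fin 4 × Fin 4) :
    (∑ a : Fin 4 × Fin 4, Gent u v (p.1.rev, p.2) (a.1.rev, a.2) * Gent u v a r)
      = (∑ a : Fin 4 × Fin 4, Gent u v p a * Gent u v (a.1.rev, a.2) (r.1.rev, r.2)) := by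
  rw [Gsum_right u v (fun a => Gent u v (p.1.rev, p.2) (a.1.rev, a.2)) r,
    Gsum_left u v (fun a => Gent u v (a.1.rev, a.2) (r.1.rev, r.2)) p]
  obtain ⟨p1, p2⟩ := p
  obtain ⟨r1, r2⟩ := r
  fin_cases p1 <;> fin_cases p2 <;> fin_cases r1 <;> fin_cases r2 <;>
    simp (config := { decide := true }) only [Gent, if_true, if_false] <;>
    ring

end Generic

lemma KMsq : KM * KM = 1 := by
  ext i j
  rw [Matrix.mul_apply]
  simp only [KM, Matrix.of_apply, ite_mul, one_mul, zero_mul]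
  rw [Finset.sum_ite_eq' Finset.univ i.rev
    (fun x => if j = x.rev then (1 : RatFunc ℂ) else 0)]
  simp [Fin.rev_rev, Matrix.one_apply, eq_comm]

lemma K1_apply (p r : Fin 4 × Fin 4) :
    K1 p r = if r = (p.1.rev, p.2) then 1 else 0 := by
  simp only [K1, KM, Matrix.of_apply]
  rcases eq_or_ne r.1 p.1.rev with h1 | h1
  · rcases eq_or_ne r.2 p.2 with h2 | h2
    · simp [h1, h2, Prod.ext_iff]
    · simp [h1, h2, Ne.symm h2, Prod.ext_iff]
  · simp [h1, Prod.ext_iff]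

lemma K1_mul (M : Matrix (Fin 4 × Fin 4) (Fin 4 × Fin 4) (RatFunc ℂ)) (p r) :
    (K1 * M) p r = M (p.1.rev, p.2) r := by
  simp only [Matrix.mul_apply, K1_apply, ite_mul, one_mul, zero_mul]
  exact (Finset.sum_ite_eq' Finset.univ _ (fun x => M x r)).trans (by simp)

lemma mul_K1 (M : Matrix (Fin 4 × Fin 4) (Fin 4 × Fin 4) (RatFunc ℂ)) (p r) :
    (M * K1) p r = M p (r.1.rev, r.2) := by
  have h : ∀ x : Fin 4 × Fin 4, K1 x r = if x = (r.1.rev, r.2) then 1 else 0 := by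
    intro x
    rw [K1_apply]
    rcases eq_or_ne x (r.1.rev, r.2) with h | h
    · simp [h, Fin.rev_rev]
    · have h2 : ¬ r = (x.1.rev, x.2) := by
        rintro rfl
        exact h (by simp [Fin.rev_rev])
      simp [h2, h]
  simp only [Matrix.mul_apply, h, mul_ite, mul_one, mul_zero]
  exact (Finset.sum_ite_eq' Finset.univ _ (fun x => M p x)).trans (by simp)

lemma G_apply (p r : Fin 4 × Fin 4) :
    (K1 * HM * K1) p r = Hent (p.1.rev, p.2) (r.1.rev, r.2) := by
  rw [Matrix.mul_assoc, K1_mul, mul_K1]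
  rfl

/-- `K² = id` and the reflection equation `(K⊗id)H(K⊗id)H = H(K⊗id)H(K⊗id)` hold, giving
an action of the type-B Hecke algebra `H_{1,q}(B_d)` on `V^{⊗d}`. -/
theorem K_matrix_reflection_equation :
    KM * KM = 1 ∧ K1 * HM * K1 * HM = HM * K1 * HM * K1 := by
  refine ⟨KMsq, ?_⟩
  have hassoc : HM * K1 * HM * K1 = HM * (K1 * HM * K1) := by
    rw [Matrix.mul_assoc, Matrix.mul_assoc, Matrix.mul_assoc]
  rw [hassoc]
  ext p r
  rw [Matrix.mul_apply, Matrix.mul_apply]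
  simp only [G_apply]
  exact Gkey q⁻¹ q p r

end
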